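/- arXiv:math/0211341 — 3 statements merged into one kernel-verified Lean document; each statement's English description precedes it below -/
import Mathlib

section
/- If X is a Banach space and Y, Z are closed subspaces of X of equal finite codimension, each of which is complemented in X, and u : Y → Z is an isomorphism, then u extends to an isomorphic automorphism of X. -/
/-!
A closed subspace of finite codimension has a topological complement, which is isomorphic to the
quotient. So `X ≃ Y × Y'` and `X ≃ Z × Z'` with `Y'`, `Z'` finite-dimensional of
the same dimension, hence isomorphic via some `w`, and `u × w` transported to `X` extends `u`.
-/

namespace Submodule

variable {R M : Type*} [Ring R] [AddCommGroup M] [Module R M] [TopologicalSpace M]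
  [IsTopologicalAddGroup M] {p p' q q' : Submodule R M}

noncomputable def IsTopCompl.extendEquiv (hp : IsTopCompl p p') (hq : IsTopCompl q q')
    (u : p ≃L[R] q) (w : p' ≃L[R] q') : M ≃L[R] M :=
  (prodEquivOfIsTopCompl p p' hp).symm.trans
    ((u.prodCongr w).trans (prodEquivOfIsTopCompl q q' hq))

theorem IsTopCompl.extendEquiv_apply_left (hp : IsTopCompl p p') (hq : IsTopCompl q q')
    (u : p ≃L[R] q) (w : p' ≃L[R] q') (x : p) : hp.extendEquiv hq u w x = u x := by
  simp [IsTopCompl.extendEquiv]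

end Submodule

open Submodule in
theorem extend_iso_finite_codim_general
    (X : Type*) [NormedAddCommGroup X] [NormedSpace ℝ X]
    (Y Z : Submodule ℝ X) (hY : IsClosed (Y : Set X)) (hZ : IsClosed (Z : Set X))
    [FiniteDimensional ℝ (X ⧸ Y)] [FiniteDimensional ℝ (X ⧸ Z)]
    (hcodim : Module.finrank ℝ (X ⧸ Y) = Module.finrank ℝ (X ⧸ Z))
    (u : Y ≃L[ℝ] Z) :
    ∃ U : X ≃L[ℝ] X, ∀ y : Y, U (y : X) = (u y : X) := by
  obtain ⟨Y', hY'⟩ := (ClosedComplemented.of_finiteDimensional_quotient hY).exists_isTopCompl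
  obtain ⟨Z', hZ'⟩ := (ClosedComplemented.of_finiteDimensional_quotient hZ).exists_isTopCompl
  let eY := (quotientEquivOfIsTopCompl Y Y' hY').toLinearEquiv
  let eZ := (quotientEquivOfIsTopCompl Z Z' hZ').toLinearEquiv
  have : FiniteDimensional ℝ Y' := eY.finiteDimensional
  have : FiniteDimensional ℝ Z' := eZ.finiteDimensional
  let w : Y' ≃L[ℝ] Z' := .ofFinrankEq (by rw [← eY.finrank_eq, ← eZ.finrank_eq, hcodim])
  exact ⟨hY'.extendEquiv hZ' u w, hY'.extendEquiv_apply_left hZ' u w⟩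

/-- If `Y`, `Z` are closed subspaces of a Banach space `X` of equal finite codimension, each
complemented in `X`, then every isomorphism `u : Y → Z` extends to an automorphism of `X`. -/
theorem extend_iso_finite_codim
    (X : Type*) [NormedAddCommGroup X] [NormedSpace ℝ X] [CompleteSpace X]
    (Y Z : Submodule ℝ X) (hY : IsClosed (Y : Set X)) (hZ : IsClosed (Z : Set X))
    [FiniteDimensional ℝ (X ⧸ Y)] [FiniteDimensional ℝ (X ⧸ Z)]
    (hcodim : Module.finrank ℝ (X ⧸ Y) = Module.finrank ℝ (X ⧸ Z))
    (hPY : ∃ P : X →L[ℝ] X, (∀ x : X, P x ∈ Y) ∧ ∀ y ∈ Y, P y = y)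
    (hPZ : ∃ P : X →L[ℝ] X, (∀ x : X, P x ∈ Z) ∧ ∀ z ∈ Z, P z = z)
    (u : Y ≃L[ℝ] Z) :
    ∃ U : X ≃L[ℝ] X, ∀ y : Y, U (y : X) = (u y : X) :=
  extend_iso_finite_codim_general X Y Z hY hZ hcodim u
end

section
/- If (vₙ) is a sequence of bounded linear operators on a Banach space E converging in operator norm to V, each vₙ is an isomorphism onto E with ‖vₙ‖·‖vₙ⁻¹‖ ≤ C·∏_{k=1}^{n}(1+ε^k) for a fixed 0 < ε < 1 and constant C, and the norms ‖vₙ⁻¹‖ are uniformly bounded, then V is an isomorphism of E onto itself with ‖V‖·‖V⁻¹‖ ≤ C·∏_{n=1}^{∞}(1+ε^n). -/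
/-!
Once `‖V - vₙ‖ < 1/M ≤ ‖vₙ⁻¹‖⁻¹`, the Neumann series makes `V` invertible. Inversion is continuous
on the units of the Banach algebra of operators, so `vₙ⁻¹ → V⁻¹` and `‖vₙ‖·‖vₙ⁻¹‖ → ‖V‖·‖V⁻¹‖`;
the partial products converge to the infinite product because `∑ εⁿ < ∞`, and the bound passes
to the limit.
-/

open Filter Finset Topology

theorem Finset.prod_Icc_one_eq_prod_range {M : Type*} [CommMonoid M] (f : ℕ → M) (n : ℕ) :
    ∏ k ∈ Icc 1 n, f k = ∏ k ∈ range n, f (k + 1) := by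
  rw [← Ico_add_one_right_eq_Icc, prod_Ico_eq_prod_range]
  simp [add_comm]

theorem tendsto_prod_Icc_one_add_pow {R : Type*} [NormedCommRing R] [NormOneClass R]
    [CompleteSpace R] {x : R} (hx : ‖x‖ < 1) :
    Tendsto (fun n => ∏ k ∈ Icc 1 n, (1 + x ^ k)) atTop (𝓝 (∏' n : ℕ, (1 + x ^ (n + 1)))) := by
  have hsum : Summable fun n : ℕ => ‖x ^ (n + 1)‖ :=
    ((summable_geometric_of_lt_one (norm_nonneg x) hx).comp_injective
      (add_left_injective 1)).of_nonneg_of_le (fun _ => norm_nonneg _) fun n => norm_pow_le x (n + 1)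
  simpa only [prod_Icc_one_eq_prod_range] using
    (multipliable_one_add_of_summable hsum).tendsto_prod_tprod_nat

theorem isUnit_of_tendsto_of_norm_inv_le {R ι : Type*} [NormedRing R] [HasSummableGeomSeries R]
    {l : Filter ι} [l.NeBot] {u : ι → Rˣ} {a : R} {M : ℝ}
    (hu : Tendsto (fun i => (u i : R)) l (𝓝 a)) (hM : ∀ᶠ i in l, ‖(↑(u i)⁻¹ : R)‖ ≤ M) :
    IsUnit a := by
  nontriviality R
  obtain ⟨j, hj⟩ := hM.exists
  have hM0 : 0 < M := (Units.norm_pos _).trans_le hj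
  have hnear : ∀ᶠ i in l, ‖a - u i‖ < M⁻¹ := by
    simpa only [dist_eq_norm'] using Metric.tendsto_nhds.1 hu M⁻¹ (inv_pos.2 hM0)
  obtain ⟨i, hi, hMi⟩ := (hnear.and hM).exists
  exact (Units.ofNearby (u i) a (hi.trans_le (inv_anti₀ (Units.norm_pos _) hMi))).isUnit

theorem ContinuousLinearEquiv.exists_eq_of_tendsto_of_norm_symm_le {𝕜 E ι : Type*}
    [NontriviallyNormedField 𝕜] [NormedAddCommGroup E] [NormedSpace 𝕜 E] [CompleteSpace E]
    {l : Filter ι} [l.NeBot] {v : ι → E ≃L[𝕜] E} {V : E →L[𝕜] E} {M : ℝ}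
    (hv : Tendsto (fun i => (v i : E →L[𝕜] E)) l (𝓝 V))
    (hM : ∀ᶠ i in l, ‖((v i).symm : E →L[𝕜] E)‖ ≤ M) :
    ∃ W : E ≃L[𝕜] E, (W : E →L[𝕜] E) = V ∧
      Tendsto (fun i => ((v i).symm : E →L[𝕜] E)) l (𝓝 (W.symm : E →L[𝕜] E)) := by
  obtain ⟨U, rfl⟩ := isUnit_of_tendsto_of_norm_inv_le (u := fun i => (v i).toUnit) hv hM
  refine ⟨unitsEquiv 𝕜 E U, rfl, ?_⟩
  have hinv (i : ι) : Ring.inverse (v i : E →L[𝕜] E) = (v i).symm :=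
    Ring.inverse_unit (v i).toUnit
  have h := (NormedRing.inverse_continuousAt U).tendsto.comp hv
  simp only [Function.comp_def, hinv, Ring.inverse_unit] at h
  exact h

/-- If a sequence of isomorphisms `vₙ` of a Banach space `E` converges in operator norm to `V`,
with `‖vₙ‖·‖vₙ⁻¹‖ ≤ C·∏_{k=1}^{n}(1+ε^k)` and `‖vₙ⁻¹‖` uniformly bounded, then `V` is an
isomorphism of `E` onto itself with `‖V‖·‖V⁻¹‖ ≤ C·∏_{n=1}^{∞}(1+ε^n)`. -/
theorem limit_of_isomorphisms
    (E : Type*) [NormedAddCommGroup E] [NormedSpace ℝ E] [CompleteSpace E]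
    (v : ℕ → (E ≃L[ℝ] E)) (V : E →L[ℝ] E) (ε C M : ℝ) (hε0 : 0 < ε) (hε1 : ε < 1)
    (hbound : ∀ n : ℕ, ‖(v n : E →L[ℝ] E)‖ * ‖((v n).symm : E →L[ℝ] E)‖ ≤
      C * ∏ k ∈ Finset.Icc 1 n, (1 + ε ^ k))
    (hM : ∀ n : ℕ, ‖((v n).symm : E →L[ℝ] E)‖ ≤ M)
    (hconv : Tendsto (fun n => ‖(v n : E →L[ℝ] E) - V‖) atTop (nhds 0)) :
    ∃ W : E ≃L[ℝ] E, (W : E →L[ℝ] E) = V ∧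
      ‖(W : E →L[ℝ] E)‖ * ‖(W.symm : E →L[ℝ] E)‖ ≤ C * ∏' n : ℕ, (1 + ε ^ (n + 1)) := by
  have hv := tendsto_iff_norm_sub_tendsto_zero.2 hconv
  obtain ⟨W, rfl, hsymm⟩ :=
    ContinuousLinearEquiv.exists_eq_of_tendsto_of_norm_symm_le hv (Eventually.of_forall hM)
  have hprod := tendsto_prod_Icc_one_add_pow (x := ε) (by rwa [Real.norm_of_nonneg hε0.le])
  exact ⟨W, rfl, le_of_tendsto_of_tendsto' (hv.norm.mul hsymm.norm) (hprod.const_mul C) hbound⟩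
end

section
/- Let E be a Banach space and F a complemented subspace of E such that every isomorphism between subspaces of E of equal codimension extends to an automorphism of E. Suppose A, B are isomorphic closed subspaces of F of equal codimension in F, with u : A → B an isomorphism, and suppose the resulting intersection F ∩ UF (U the extending automorphism) is complemented in E with F' and F'' the complements of F ∩ UF in F and UF respectively isomorphic via v. Then w := (v ⊕ id) ∘ U|_F is an automorphism of F whose restriction to A equals u. -/
/-!
Put `M = F ∩ UF`. The map `(v ⊕ id) ∘ U` need not be bounded, as `F'` and `F''` need not be
closed, so subspace-homogeneity is used once more instead. The operator `z ↦ U (P z) + (z - P z)` maps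
`X = {z | U (P z) ∈ M}` isomorphically onto `Y = {z | P z ∈ M}`, and these have equal codimension:
`E/X ≅ F/U⁻¹M ≅ UF/M ≅ F'' ≅ F' ≅ F/M ≅ E/Y`. An automorphism `V` of `E` extending it fixes
`ker P` pointwise, so its compression `f ↦ P (V f)` is an automorphism of `F`, and it agrees with
`U` wherever `U` lands in `M`, in particular on `A`.
-/

namespace Submodule

variable {R E : Type*} [Ring R] [AddCommGroup E] [Module R E]

theorem rank_quotient_comap_of_retraction {F : Submodule R E} (P : E →ₗ[R] E)
    (hPF : ∀ x, P x ∈ F) (hPid : ∀ y ∈ F, P y = y) (S : Submodule R E) :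
    Module.rank R (E ⧸ S.comap P) = Module.rank R (F ⧸ S.comap F.subtype) := by
  set r := P.codRestrict F hPF
  have hr : Function.Surjective ((S.comap F.subtype).mkQ ∘ₗ r) :=
    (S.comap F.subtype).mkQ_surjective.comp fun y => ⟨y, Subtype.ext (hPid y y.2)⟩
  have hker : S.comap P = LinearMap.ker ((S.comap F.subtype).mkQ ∘ₗ r) := by
    rw [LinearMap.ker_comp, ker_mkQ, ← comap_comp, LinearMap.subtype_comp_codRestrict]
  rw [hker]
  exact (LinearMap.quotKerEquivOfSurjective _ hr).rank_eq

theorem rank_quotient_comap_eq_rank_of_sup_of_inf {M C W : Submodule R E}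
    (hsup : M ⊔ C = W) (hinf : M ⊓ C = ⊥) :
    Module.rank R (W ⧸ M.comap W.subtype) = Module.rank R C := by
  subst hsup
  rw [sup_comm, ← (LinearMap.quotientInfEquivSupQuotient C M).rank_eq, ← comap_inf, inf_comm,
    hinf, comap_bot, ker_subtype]
  exact (quotEquivOfEqBot ⊥ rfl).rank_eq

theorem rank_quotient_comap_map_of_injective {f : E →ₗ[R] E} (hf : Function.Injective f)
    (F S : Submodule R E) :
    Module.rank R (F ⧸ (S.comap f).comap F.subtype) =
      Module.rank R (F.map f ⧸ S.comap (F.map f).subtype) := by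
  refine (Quotient.equiv _ _ (equivMapOfInjective f hf F) ?_).rank_eq
  ext ⟨y, hy⟩
  obtain ⟨x, hx, rfl⟩ := mem_map.1 hy
  simp

end Submodule

section Compression

variable {R E : Type*} [Ring R] [TopologicalSpace E] [AddCommGroup E] [Module R E]
  {F : Submodule R E}

theorem proj_symm_proj_apply (P : E →L[R] E) (hPF : ∀ x, P x ∈ F) (hPid : ∀ y ∈ F, P y = y)
    (V : E ≃L[R] E) (hV : ∀ z, P z = 0 → V z = z) {f : E} (hf : f ∈ F) :
    P (V.symm (P (V f))) = f := by
  set k := V f - P (V f)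
  have hk : P k = 0 := by rw [map_sub, hPid _ (hPF _), sub_self]
  have hVk : V.symm k = k := V.symm_apply_eq.2 (hV k hk).symm
  calc P (V.symm (P (V f))) = P (V.symm (V f) - V.symm k) := by
        rw [← map_sub, sub_sub_cancel]
    _ = f := by rw [V.symm_apply_apply, hVk, map_sub, hk, sub_zero, hPid f hf]

/-- `f ↦ P (V f)` is invertible, with inverse `f ↦ P (V⁻¹ f)`, because `V` preserves `ker P`
and so induces an automorphism of `E ⧸ ker P ≃ F`. -/
noncomputable def compressEquiv (P : E →L[R] E) (hPF : ∀ x, P x ∈ F) (hPid : ∀ y ∈ F, P y = y)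
    (V : E ≃L[R] E) (hV : ∀ z, P z = 0 → V z = z) : F ≃L[R] F :=
  .equivOfInverse ((P ∘L (V : E →L[R] E) ∘L F.subtypeL).codRestrict F fun _ => hPF _)
    ((P ∘L (V.symm : E →L[R] E) ∘L F.subtypeL).codRestrict F fun _ => hPF _)
    (fun f => Subtype.ext (proj_symm_proj_apply P hPF hPid V hV f.2))
    (fun f => Subtype.ext (proj_symm_proj_apply P hPF hPid V.symm
      (fun z hz => V.symm_apply_eq.2 (hV z hz).symm) f.2))

theorem coe_compressEquiv_apply (P : E →L[R] E) (hPF : ∀ x, P x ∈ F)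
    (hPid : ∀ y ∈ F, P y = y) (V : E ≃L[R] E) (hV : ∀ z, P z = 0 → V z = z) (f : F) :
    (compressEquiv P hPF hPid V hV f : E) = P (V f) :=
  rfl

variable [IsTopologicalAddGroup E]

def twistMap (P U : E →L[R] E) : E →L[R] E :=
  U ∘L P + (ContinuousLinearMap.id R E - P)

@[simp]
theorem twistMap_apply (P U : E →L[R] E) (z : E) : twistMap P U z = U (P z) + (z - P z) :=
  rfl

theorem proj_twistMap_apply (P : E →L[R] E) (hPF : ∀ x, P x ∈ F) (hPid : ∀ y ∈ F, P y = y)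
    (U : E →L[R] E) {z : E} (hz : U (P z) ∈ F) : P (twistMap P U z) = U (P z) := by
  rw [twistMap_apply, map_add, map_sub, hPid _ (hPF z), sub_self, add_zero, hPid _ hz]

theorem twistMap_twistMap_apply (P : E →L[R] E) (hPF : ∀ x, P x ∈ F)
    (hPid : ∀ y ∈ F, P y = y) {U U' : E →L[R] E} (hUU' : ∀ x, U (U' x) = x) {z : E}
    (hz : U' (P z) ∈ F) : twistMap P U (twistMap P U' z) = z := by
  rw [twistMap_apply, proj_twistMap_apply P hPF hPid U' hz, hUU', twistMap_apply]
  abel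

noncomputable def twistEquiv (P : E →L[R] E) (hPF : ∀ x, P x ∈ F) (hPid : ∀ y ∈ F, P y = y)
    (U : E ≃L[R] E) {M : Submodule R E} (hMF : M ≤ F)
    (hMU : M ≤ F.map ((U : E →L[R] E) : E →ₗ[R] E)) :
    (M.comap ((U : E →L[R] E) : E →ₗ[R] E)).comap (P : E →ₗ[R] E) ≃L[R]
      M.comap (P : E →ₗ[R] E) :=
  have hUsymm : ∀ m ∈ M, U.symm m ∈ F := fun m hm => by
    obtain ⟨f, hf, rfl⟩ := hMU hm
    simpa using hf
  .equivOfInverse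
    ((twistMap P U ∘L Submodule.subtypeL _).codRestrict _ fun z => by
      have hz : (U : E →L[R] E) (P z) ∈ M := z.2
      show P (twistMap P U z) ∈ M
      rwa [proj_twistMap_apply P hPF hPid _ (hMF hz)])
    ((twistMap P U.symm ∘L Submodule.subtypeL _).codRestrict _ fun z => by
      have hz : P z ∈ M := z.2
      show U (P (twistMap P U.symm z)) ∈ M
      rwa [proj_twistMap_apply P hPF hPid _ (hUsymm _ hz), ContinuousLinearEquiv.coe_coe,
        U.apply_symm_apply])
    (fun z => Subtype.ext <| twistMap_twistMap_apply P hPF hPid U.symm_apply_apply (hMF z.2))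
    (fun z => Subtype.ext <| twistMap_twistMap_apply P hPF hPid U.apply_symm_apply
      (hUsymm _ z.2))

theorem exists_equiv_eq_of_eq_twistMap (P : E →L[R] E) (hPF : ∀ x, P x ∈ F)
    (hPid : ∀ y ∈ F, P y = y) (U : E ≃L[R] E) {M : Submodule R E} (hMF : M ≤ F) (V : E ≃L[R] E)
    (hV : ∀ z, U (P z) ∈ M → V z = twistMap P U z) :
    ∃ w : F ≃L[R] F, ∀ x : F, U x ∈ M → (w x : E) = U x := by
  have hVker : ∀ z, P z = 0 → V z = z := fun z hz => by
    rw [hV z (by rw [hz, map_zero]; exact M.zero_mem), twistMap_apply, hz, map_zero, zero_add,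
      sub_zero]
  refine ⟨compressEquiv P hPF hPid V hVker, fun x hx => ?_⟩
  have hPx : U (P x) ∈ M := by rwa [hPid x x.2]
  rw [coe_compressEquiv_apply, hV x hPx, proj_twistMap_apply P hPF hPid U (hMF hPx),
    ContinuousLinearEquiv.coe_coe, hPid x x.2]

end Compression

theorem automorphism_of_complemented_subspace_general
    (E : Type*) [NormedAddCommGroup E] [NormedSpace ℝ E] [CompleteSpace E]
    (F : Submodule ℝ E) (hF : IsClosed (F : Set E))
    (P : E →L[ℝ] E) (hPF : ∀ x : E, P x ∈ F) (hPid : ∀ y ∈ F, P y = y)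
    (hhom : ∀ (A B : Submodule ℝ E), IsClosed (A : Set E) → IsClosed (B : Set E) →
      Module.rank ℝ (E ⧸ A) = Module.rank ℝ (E ⧸ B) →
      ∀ u₀ : A ≃L[ℝ] B, ∃ U₀ : E ≃L[ℝ] E, ∀ a : A, U₀ (a : E) = (u₀ a : E))
    (A B : Submodule ℝ E)
    (hAF : A ≤ F) (hBF : B ≤ F)
    (u : A ≃L[ℝ] B)
    (U : E ≃L[ℝ] E) (hU : ∀ a : A, U (a : E) = (u a : E))
    (F' F'' : Submodule ℝ E)
    (hF'₁ : (F ⊓ F.map ((U : E →L[ℝ] E) : E →ₗ[ℝ] E)) ⊔ F' = F)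
    (hF'₂ : (F ⊓ F.map ((U : E →L[ℝ] E) : E →ₗ[ℝ] E)) ⊓ F' = ⊥)
    (hF''₁ : (F ⊓ F.map ((U : E →L[ℝ] E) : E →ₗ[ℝ] E)) ⊔ F'' = F.map ((U : E →L[ℝ] E) : E →ₗ[ℝ] E))
    (hF''₂ : (F ⊓ F.map ((U : E →L[ℝ] E) : E →ₗ[ℝ] E)) ⊓ F'' = ⊥)
    (v : F' ≃L[ℝ] F'') :
    ∃ w : F ≃L[ℝ] F,
      (∀ a : A, ((w ⟨(a : E), hAF a.2⟩ : F) : E) = ((u a : B) : E)) ∧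
      (∀ x : F, U (x : E) ∈ F ⊓ F.map ((U : E →L[ℝ] E) : E →ₗ[ℝ] E) →
        ((w x : F) : E) = U (x : E)) := by
  set M := F ⊓ F.map ((U : E →L[ℝ] E) : E →ₗ[ℝ] E)
  have hMc : IsClosed (M : Set E) :=
    hF.inter (by simpa [Submodule.map_coe] using U.isClosed_image.2 hF)
  have hrank :
      Module.rank ℝ (E ⧸ (M.comap ((U : E →L[ℝ] E) : E →ₗ[ℝ] E)).comap (P : E →ₗ[ℝ] E)) =
        Module.rank ℝ (E ⧸ M.comap (P : E →ₗ[ℝ] E)) := by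
    rw [Submodule.rank_quotient_comap_of_retraction _ hPF hPid,
      Submodule.rank_quotient_comap_of_retraction _ hPF hPid,
      Submodule.rank_quotient_comap_map_of_injective (f := ((U : E →L[ℝ] E) : E →ₗ[ℝ] E))
        U.injective,
      Submodule.rank_quotient_comap_eq_rank_of_sup_of_inf hF''₁ hF''₂,
      Submodule.rank_quotient_comap_eq_rank_of_sup_of_inf hF'₁ hF'₂, v.toLinearEquiv.rank_eq]
  obtain ⟨V, hV⟩ := hhom _ _ (hMc.preimage (U.continuous.comp P.continuous))
    (hMc.preimage P.continuous) hrank (twistEquiv P hPF hPid U inf_le_left inf_le_right)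
  obtain ⟨w, hw⟩ := exists_equiv_eq_of_eq_twistMap P hPF hPid U inf_le_left V
    fun z hz => hV ⟨z, hz⟩
  refine ⟨w, fun a => ?_, hw⟩
  have hUa : U a ∈ M := ⟨hU a ▸ hBF (u a).2, a, hAF a.2, rfl⟩
  rw [hw _ hUa, hU a]

/-- If `F` is a complemented subspace of a subspace-homogeneous Banach space `E`, `A, B` are
isomorphic closed subspaces of `F` of equal codimension in `F` with isomorphism `u : A → B`,
`U` an automorphism of `E` extending `u`, `F ∩ UF` is complemented in `E`, and `F'`, `F''` are
complements of `F ∩ UF` in `F` and in `UF` respectively, isomorphic via `v`, then there is an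
automorphism `w` of `F` whose restriction to `A` equals `u` (and which agrees with `U` on
vectors carried into `F ∩ UF`). -/
theorem automorphism_of_complemented_subspace
    (E : Type*) [NormedAddCommGroup E] [NormedSpace ℝ E] [CompleteSpace E]
    (F : Submodule ℝ E) (hF : IsClosed (F : Set E))
    (P : E →L[ℝ] E) (hPF : ∀ x : E, P x ∈ F) (hPid : ∀ y ∈ F, P y = y)
    (hhom : ∀ (A B : Submodule ℝ E), IsClosed (A : Set E) → IsClosed (B : Set E) →
      Module.rank ℝ (E ⧸ A) = Module.rank ℝ (E ⧸ B) →
      ∀ u₀ : A ≃L[ℝ] B, ∃ U₀ : E ≃L[ℝ] E, ∀ a : A, U₀ (a : E) = (u₀ a : E))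
    (A B : Submodule ℝ E) (hA : IsClosed (A : Set E)) (hB : IsClosed (B : Set E))
    (hAF : A ≤ F) (hBF : B ≤ F)
    (hcodim : Module.rank ℝ (F ⧸ A.comap F.subtype) = Module.rank ℝ (F ⧸ B.comap F.subtype))
    (u : A ≃L[ℝ] B)
    (U : E ≃L[ℝ] E) (hU : ∀ a : A, U (a : E) = (u a : E))
    (hQ : ∃ Q : E →L[ℝ] E, (∀ x : E, Q x ∈ F ⊓ F.map ((U : E →L[ℝ] E) : E →ₗ[ℝ] E)) ∧
      ∀ y ∈ F ⊓ F.map ((U : E →L[ℝ] E) : E →ₗ[ℝ] E), Q y = y)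
    (F' F'' : Submodule ℝ E)
    (hF'₁ : (F ⊓ F.map ((U : E →L[ℝ] E) : E →ₗ[ℝ] E)) ⊔ F' = F)
    (hF'₂ : (F ⊓ F.map ((U : E →L[ℝ] E) : E →ₗ[ℝ] E)) ⊓ F' = ⊥)
    (hF''₁ : (F ⊓ F.map ((U : E →L[ℝ] E) : E →ₗ[ℝ] E)) ⊔ F'' = F.map ((U : E →L[ℝ] E) : E →ₗ[ℝ] E))
    (hF''₂ : (F ⊓ F.map ((U : E →L[ℝ] E) : E →ₗ[ℝ] E)) ⊓ F'' = ⊥)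
    (v : F' ≃L[ℝ] F'') :
    ∃ w : F ≃L[ℝ] F,
      (∀ a : A, ((w ⟨(a : E), hAF a.2⟩ : F) : E) = ((u a : B) : E)) ∧
      (∀ x : F, U (x : E) ∈ F ⊓ F.map ((U : E →L[ℝ] E) : E →ₗ[ℝ] E) →
        ((w x : F) : E) = U (x : E)) :=
  automorphism_of_complemented_subspace_general E F hF P hPF hPid hhom A B hAF hBF u U hU F' F''
    hF'₁ hF'₂ hF''₁ hF''₂ v
end
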